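/- Let m_x, m_w, m_y be positive integers, s_x, s_w, s_y > 0, and let X, W, Y be independent random variables, Gamma-distributed with shapes m_x, m_w, m_y and scales s_x, s_w, s_y respectively. Then for any theta > 0 and c > 0: P( min(X, W) >= theta*(Y + c) ) = exp( - theta*c*(1/s_x + 1/s_w) ) * sum_{n=0}^{m_x-1} sum_{n'=0}^{m_w-1} [ (theta/s_x)^n * (theta/s_w)^{n'} / (n! * n'!) ] * sum_{i=0}^{n+n'} C(n+n', i) * c^{n+n'-i} * [ Gamma(m_y + i) / (Gamma(m_y) * s_y^{m_y}) ] * ( theta*(1/s_x + 1/s_w) + 1/s_y )^{-(m_y+i)}, where C denotes the binomial coefficient and Gamma is the Gamma function. -/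

import Mathlib

open MeasureTheory ProbabilityTheory Real Finset
open scoped Nat

/-!
Conditioning on `Y = y`, the event is `min X W ≥ θ (y + c)`; by independence its probability is
the product of the Erlang tails `e^{-rt} ∑_{n<m} (rt)^n / n!` of `X` and `W` at `t = θ (y + c)`
(the derivative of such a tail is minus the gamma density). Expanding `(y + c)^(n + n')`
binomially reduces the average over `Y` to the moments `E[Y^i e^{-aY}]`, which are explicit
because `y^i e^{-ay}` times the `Gamma(m, ρ)` density is a multiple of the `Gamma(m + i, a + ρ)`
density.
-/

namespace ProbabilityTheory

lemma measurable_gammaPDF (α r : ℝ) : Measurable (gammaPDF α r) :=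
  (measurable_gammaPDFReal α r).ennreal_ofReal

lemma integrable_gammaPDFReal {α r : ℝ} (hα : 0 < α) (hr : 0 < r) :
    Integrable (gammaPDFReal α r) := by
  have := integrable_toReal_of_lintegral_ne_top (measurable_gammaPDF α r).aemeasurable
    ((lintegral_gammaPDF_eq_one hα hr).trans_ne ENNReal.one_ne_top)
  simpa [gammaPDF, ENNReal.toReal_ofReal (gammaPDFReal_nonneg hα hr _)] using this

lemma integral_gammaPDFReal {α r : ℝ} (hα : 0 < α) (hr : 0 < r) :
    ∫ y, gammaPDFReal α r y = 1 := by
  rw [integral_eq_lintegral_of_nonneg_ae (ae_of_all _ (gammaPDFReal_nonneg hα hr))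
    (measurable_gammaPDFReal α r).aestronglyMeasurable]
  simpa [gammaPDF] using congrArg ENNReal.toReal (lintegral_gammaPDF_eq_one hα hr)

lemma integral_gammaMeasure {α r : ℝ} (hα : 0 < α) (hr : 0 < r) (f : ℝ → ℝ) :
    ∫ y, f y ∂gammaMeasure α r = ∫ y, gammaPDFReal α r y * f y := by
  rw [gammaMeasure, integral_withDensity_eq_integral_toReal_smul (measurable_gammaPDF α r)
    (ae_of_all _ fun _ => ENNReal.ofReal_lt_top)]
  simp [gammaPDF, ENNReal.toReal_ofReal (gammaPDFReal_nonneg hα hr _)]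

lemma integrable_gammaMeasure_iff {α r : ℝ} (hα : 0 < α) (hr : 0 < r) {f : ℝ → ℝ} :
    Integrable f (gammaMeasure α r) ↔ Integrable (fun y => gammaPDFReal α r y * f y) := by
  rw [gammaMeasure, integrable_withDensity_iff_integrable_smul' (measurable_gammaPDF α r)
    (ae_of_all _ fun _ => ENNReal.ofReal_lt_top)]
  simp [gammaPDF, ENNReal.toReal_ofReal (gammaPDFReal_nonneg hα hr _)]

lemma ae_nonneg_gammaMeasure (α r : ℝ) : ∀ᵐ y ∂gammaMeasure α r, 0 ≤ y := by
  rw [ae_iff, show {y : ℝ | ¬0 ≤ y} = Set.Iio 0 by ext; simp, gammaMeasure,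
    withDensity_apply _ measurableSet_Iio]
  exact lintegral_gammaPDF_of_nonpos le_rfl

lemma gammaPDFReal_mul_pow_mul_exp_neg {α r a y : ℝ} (hα : 0 < α) (har : 0 < a + r) (hy : y ≠ 0)
    (i : ℕ) :
    gammaPDFReal α r y * (y ^ i * exp (-(a * y))) =
      r ^ α / Gamma α * Gamma (α + i) / (a + r) ^ (α + i) * gammaPDFReal (α + i) (a + r) y := by
  rcases hy.lt_or_gt with hy | hy
  · simp [gammaPDFReal, hy.not_ge]
  have hΓ : Gamma (α + i) ≠ 0 := (Gamma_pos_of_pos (by positivity)).ne'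
  have hpow : y ^ (α - 1) * y ^ i = y ^ (α + i - 1) := by
    rw [← rpow_natCast, ← rpow_add hy]; ring_nf
  have hexp : exp (-(r * y)) * exp (-(a * y)) = exp (-((a + r) * y)) := by
    rw [← exp_add]; ring_nf
  have hrpow : (a + r) ^ (α + i) ≠ 0 := (rpow_pos_of_pos har _).ne'
  simp only [gammaPDFReal, if_pos hy.le]
  rw [← hpow, ← hexp]
  field_simp

lemma integrable_pow_mul_exp_neg_gammaMeasure {α r a : ℝ} (hα : 0 < α) (hr : 0 < r)
    (har : 0 < a + r) (i : ℕ) :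
    Integrable (fun y => y ^ i * exp (-(a * y))) (gammaMeasure α r) := by
  rw [integrable_gammaMeasure_iff hα hr]
  refine ((integrable_gammaPDFReal (α := α + i) (by positivity) har).const_mul
    (r ^ α / Gamma α * Gamma (α + i) / (a + r) ^ (α + i))).congr ?_
  filter_upwards [volume.ae_ne 0] with y hy
  exact (gammaPDFReal_mul_pow_mul_exp_neg hα har hy i).symm

lemma integral_pow_mul_exp_neg_gammaMeasure {α r a : ℝ} (hα : 0 < α) (hr : 0 < r)
    (har : 0 < a + r) (i : ℕ) :
    ∫ y, y ^ i * exp (-(a * y)) ∂gammaMeasure α r =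
      r ^ α / Gamma α * Gamma (α + i) / (a + r) ^ (α + i) := by
  rw [integral_gammaMeasure hα hr,
    integral_congr_ae (g := fun y => _ * gammaPDFReal (α + i) (a + r) y)
      ((volume.ae_ne 0).mono fun y hy => gammaPDFReal_mul_pow_mul_exp_neg hα har hy i),
    integral_const_mul, integral_gammaPDFReal (by positivity) har, mul_one]

noncomputable def erlangSurvival (m : ℕ) (r t : ℝ) : ℝ :=
  exp (-(r * t)) * ∑ n ∈ range m, (r * t) ^ n / n !

lemma erlangSurvival_succ (m : ℕ) (r t : ℝ) :
    erlangSurvival (m + 1) r t = erlangSurvival m r t + exp (-(r * t)) * (r * t) ^ m / m ! := by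
  simp only [erlangSurvival, sum_range_succ, mul_add, mul_div_assoc]

lemma hasDerivAt_erlangSurvival_succ (m : ℕ) (r t : ℝ) :
    HasDerivAt (erlangSurvival (m + 1) r) (-(r * exp (-(r * t)) * (r * t) ^ m / m !)) t := by
  have hexp : HasDerivAt (fun t => exp (-(r * t))) (-r * exp (-(r * t))) t := by
    simpa [mul_comm] using ((hasDerivAt_id t).const_mul r).neg.exp
  induction m with
  | zero =>
    have h1 : erlangSurvival 1 r = fun t => exp (-(r * t)) := by funext; simp [erlangSurvival]
    simpa [h1] using hexp
  | succ m ih =>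
    have hpow : HasDerivAt (fun t => (r * t) ^ (m + 1)) ((m + 1 : ℕ) * (r * t) ^ m * r) t := by
      simpa using ((hasDerivAt_id t).const_mul r).fun_pow (m + 1)
    have hterm := (hexp.mul hpow).div_const ((m + 1)! : ℝ)
    refine ((ih.add hterm).congr_deriv ?_).congr_of_eventuallyEq
      (Filter.Eventually.of_forall fun s => erlangSurvival_succ (m + 1) r s)
    rw [Nat.factorial_succ, Nat.cast_mul]
    field_simp
    ring

lemma tendsto_erlangSurvival_atTop (m : ℕ) {r : ℝ} (hr : 0 < r) :
    Filter.Tendsto (erlangSurvival m r) Filter.atTop (nhds 0) := by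
  have hrt : Filter.Tendsto (fun t : ℝ => r * t) Filter.atTop Filter.atTop :=
    Filter.tendsto_id.const_mul_atTop hr
  have := tendsto_finsetSum (range m) fun n _ =>
    ((tendsto_pow_mul_exp_neg_atTop_nhds_zero n).comp hrt).div_const (n ! : ℝ)
  simp only [Function.comp_def, zero_div, sum_const_zero] at this
  refine this.congr fun t => ?_
  simp only [erlangSurvival, mul_sum]
  exact sum_congr rfl fun n _ => by ring

lemma erlangSurvival_nonneg (m : ℕ) {r t : ℝ} (hr : 0 ≤ r) (ht : 0 ≤ t) :
    0 ≤ erlangSurvival m r t := by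
  unfold erlangSurvival
  positivity

@[fun_prop]
lemma continuous_erlangSurvival (m : ℕ) (r : ℝ) : Continuous (erlangSurvival m r) := by
  unfold erlangSurvival
  fun_prop

lemma gammaPDFReal_natCast_succ (m : ℕ) (r : ℝ) {t : ℝ} (ht : 0 ≤ t) :
    gammaPDFReal (m + 1 : ℕ) r t = r * exp (-(r * t)) * (r * t) ^ m / m ! := by
  rw [gammaPDFReal, if_pos ht, Nat.cast_add_one, Gamma_nat_eq_factorial, add_sub_cancel_right,
    rpow_natCast, ← Nat.cast_add_one, rpow_natCast, pow_succ, mul_pow]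
  ring

lemma hasDerivAt_erlangSurvival {m : ℕ} (hm : 0 < m) (r : ℝ) {t : ℝ} (ht : 0 ≤ t) :
    HasDerivAt (erlangSurvival m r) (-gammaPDFReal m r t) t := by
  obtain ⟨k, rfl⟩ := Nat.exists_eq_add_one_of_ne_zero hm.ne'
  rw [gammaPDFReal_natCast_succ k r ht]
  exact hasDerivAt_erlangSurvival_succ k r t

lemma integral_Ioi_gammaPDFReal {m : ℕ} (hm : 0 < m) {r t : ℝ} (hr : 0 < r) (ht : 0 ≤ t) :
    ∫ x in Set.Ioi t, gammaPDFReal m r x = erlangSurvival m r t := by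
  have hm' : (0 : ℝ) < m := Nat.cast_pos.mpr hm
  have := integral_Ioi_of_hasDerivAt_of_tendsto
    (hasDerivAt_erlangSurvival hm r ht).continuousAt.continuousWithinAt
    (fun x hx => hasDerivAt_erlangSurvival hm r (ht.trans hx.le))
    (integrable_gammaPDFReal hm' hr).integrableOn.neg (tendsto_erlangSurvival_atTop m hr)
  rw [integral_neg] at this
  linarith

lemma gammaMeasure_Ici {m : ℕ} (hm : 0 < m) {r t : ℝ} (hr : 0 < r) (ht : 0 ≤ t) :
    gammaMeasure m r (Set.Ici t) = ENNReal.ofReal (erlangSurvival m r t) := by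
  have hm' : (0 : ℝ) < m := Nat.cast_pos.mpr hm
  rw [gammaMeasure, withDensity_apply _ measurableSet_Ici, ← integral_Ioi_gammaPDFReal hm hr ht,
    ← integral_Ici_eq_integral_Ioi, ofReal_integral_eq_lintegral_ofReal
      (integrable_gammaPDFReal hm' hr).integrableOn
      (ae_of_all _ (gammaPDFReal_nonneg hm' hr))]
  rfl

section Independence

variable {Ω β : Type*} [MeasurableSpace Ω] [MeasurableSpace β] {μ : Measure Ω}

lemma IndepFun.measure_le_eq_lintegral [IsFiniteMeasure μ] {Y : Ω → β} {Z : Ω → ℝ}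
    (hYZ : IndepFun Y Z μ) (hY : Measurable Y) (hZ : Measurable Z) {g : β → ℝ}
    (hg : Measurable g) :
    μ {ω | g (Y ω) ≤ Z ω} = ∫⁻ y, μ {ω | g y ≤ Z ω} ∂μ.map Y := by
  have hS : MeasurableSet {p : β × ℝ | g p.1 ≤ p.2} :=
    measurableSet_le (hg.comp measurable_fst) measurable_snd
  rw [show {ω | g (Y ω) ≤ Z ω} = (fun ω => (Y ω, Z ω)) ⁻¹' {p | g p.1 ≤ p.2} from rfl,
    ← Measure.map_apply (hY.prodMk hZ) hS,
    (indepFun_iff_map_prod_eq_prod_map_map hY.aemeasurable hZ.aemeasurable).mp hYZ,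
    Measure.prod_apply hS]
  refine lintegral_congr fun y => ?_
  rw [Measure.map_apply hZ (measurable_prodMk_left hS)]
  rfl

lemma IndepFun.measure_le_min {X W : Ω → ℝ} (hXW : IndepFun X W μ) (t : ℝ) :
    μ {ω | t ≤ min (X ω) (W ω)} = μ {ω | t ≤ X ω} * μ {ω | t ≤ W ω} := by
  simp only [le_min_iff, Set.ofPred_and]
  exact hXW.measure_inter_preimage_eq_mul _ _ measurableSet_Ici measurableSet_Ici

end Independence

lemma erlangSurvival_mul_erlangSurvival (m m' : ℕ) (r r' θ c y : ℝ) :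
    erlangSurvival m r (θ * (y + c)) * erlangSurvival m' r' (θ * (y + c)) =
      exp (-(θ * c * (r + r'))) * ∑ n ∈ range m, ∑ n' ∈ range m',
        ((θ * r) ^ n * (θ * r') ^ n' / (n ! * n' !)) *
        ∑ i ∈ range (n + n' + 1),
          ((n + n').choose i : ℝ) * c ^ (n + n' - i) * (y ^ i * exp (-(θ * (r + r') * y))) := by
  have hexp : exp (-(r * (θ * (y + c)))) * exp (-(r' * (θ * (y + c)))) =
      exp (-(θ * c * (r + r'))) * exp (-(θ * (r + r') * y)) := by
    rw [← exp_add, ← exp_add]; ring_nf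
  have hbinom (n n' : ℕ) : ∑ i ∈ range (n + n' + 1),
      ((n + n').choose i : ℝ) * c ^ (n + n' - i) * (y ^ i * exp (-(θ * (r + r') * y))) =
      (y + c) ^ (n + n') * exp (-(θ * (r + r') * y)) := by
    rw [add_pow, sum_mul]
    exact sum_congr rfl fun i _ => by ring
  simp only [erlangSurvival, hbinom]
  rw [mul_mul_mul_comm, hexp, sum_mul_sum, mul_assoc]
  congr 1
  rw [mul_sum]
  refine sum_congr rfl fun n _ => ?_
  rw [mul_sum]
  refine sum_congr rfl fun n' _ => ?_
  rw [pow_add, mul_pow, mul_pow, mul_pow, mul_pow]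
  field_simp
  ring

lemma integral_erlangSurvival_mul_erlangSurvival_gammaMeasure (m_x m_w : ℕ) {m_y : ℕ}
    (hmy : 0 < m_y) {s_x s_w s_y θ : ℝ} (hsx : 0 < s_x) (hsw : 0 < s_w) (hsy : 0 < s_y)
    (hθ : 0 ≤ θ) (c : ℝ) :
    ∫ y, erlangSurvival m_x (1 / s_x) (θ * (y + c)) * erlangSurvival m_w (1 / s_w) (θ * (y + c))
        ∂gammaMeasure m_y (1 / s_y) =
      exp (-(θ * c * (1 / s_x + 1 / s_w))) * ∑ n ∈ range m_x, ∑ n' ∈ range m_w,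
        ((θ / s_x) ^ n * (θ / s_w) ^ n' / (n ! * n' !)) *
        ∑ i ∈ range (n + n' + 1), ((n + n').choose i : ℝ) * c ^ (n + n' - i) *
          (Gamma (m_y + i) / (Gamma m_y * s_y ^ m_y)) *
          (θ * (1 / s_x + 1 / s_w) + 1 / s_y) ^ (-((m_y : ℤ) + i)) := by
  have hα : (0 : ℝ) < m_y := Nat.cast_pos.mpr hmy
  have hρ : (0 : ℝ) < 1 / s_y := by positivity
  have hb : 0 < θ * (1 / s_x + 1 / s_w) + 1 / s_y := by positivity
  have hint (i : ℕ) := integrable_pow_mul_exp_neg_gammaMeasure hα hρ hb i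
  simp_rw [erlangSurvival_mul_erlangSurvival, mul_one_div]
  rw [integral_const_mul, integral_finsetSum _ fun n _ => integrable_finsetSum _ fun n' _ =>
    (integrable_finsetSum _ fun i _ => (hint i).const_mul _).const_mul _]
  congr 1
  refine sum_congr rfl fun n _ => ?_
  rw [integral_finsetSum _ fun n' _ =>
    (integrable_finsetSum _ fun i _ => (hint i).const_mul _).const_mul _]
  refine sum_congr rfl fun n' _ => ?_
  rw [integral_const_mul, integral_finsetSum _ fun i _ => (hint i).const_mul _]
  congr 1
  refine sum_congr rfl fun i _ => ?_
  rw [integral_const_mul, integral_pow_mul_exp_neg_gammaMeasure hα hρ hb, rpow_natCast,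
    ← Nat.cast_add, rpow_natCast, show -((m_y : ℤ) + i) = -((m_y + i : ℕ) : ℤ) by push_cast; ring,
    zpow_neg, zpow_natCast, one_div_pow]
  field_simp

end ProbabilityTheory

/-- Per-relay survival function in the relay-selection analysis:
for independent Gamma variables `X, W, Y`,
`P(min(X, W) ≥ θ(Y + c))` in closed form. -/
theorem per_relay_survival_closed_form
    {Ω : Type*} [MeasurableSpace Ω] (μ : Measure Ω) [IsProbabilityMeasure μ]
    (m_x m_w m_y : ℕ) (hmx : 0 < m_x) (hmw : 0 < m_w) (hmy : 0 < m_y)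
    (s_x s_w s_y : ℝ) (hsx : 0 < s_x) (hsw : 0 < s_w) (hsy : 0 < s_y)
    (X W Y : Ω → ℝ) (hX : Measurable X) (hW : Measurable W) (hY : Measurable Y)
    (hXd : μ.map X = gammaMeasure m_x (1 / s_x))
    (hWd : μ.map W = gammaMeasure m_w (1 / s_w))
    (hYd : μ.map Y = gammaMeasure m_y (1 / s_y))
    (hindep : iIndepFun ![X, W, Y] μ)
    (θ c : ℝ) (hθ : 0 < θ) (hc : 0 < c) :
    (μ {ω | θ * (Y ω + c) ≤ min (X ω) (W ω)}).toReal =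
      Real.exp (-(θ * c * (1 / s_x + 1 / s_w))) *
        ∑ n ∈ Finset.range m_x, ∑ n' ∈ Finset.range m_w,
          ((θ / s_x) ^ n * (θ / s_w) ^ n' / ((Nat.factorial n : ℝ) * (Nat.factorial n' : ℝ))) *
          ∑ i ∈ Finset.range (n + n' + 1),
            ((n + n').choose i : ℝ) * c ^ (n + n' - i) *
            (Real.Gamma ((m_y : ℝ) + i) / (Real.Gamma m_y * s_y ^ m_y)) *
            (θ * (1 / s_x + 1 / s_w) + 1 / s_y) ^ (-((m_y : ℤ) + i)) := by
  have hXW : IndepFun X W μ := by simpa using hindep.indepFun (i := 0) (j := 1) (by decide)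
  have hYZ : IndepFun Y (fun ω => min (X ω) (W ω)) μ := by
    have hmeas (i : Fin 3) : Measurable (![X, W, Y] i) := by fin_cases i <;> assumption
    exact ((hindep.indepFun_prodMk hmeas 0 1 2 (by decide) (by decide)).comp
      (measurable_fst.min measurable_snd) measurable_id).symm
  set F : ℝ → ℝ := fun y =>
    erlangSurvival m_x (1 / s_x) (θ * (y + c)) * erlangSurvival m_w (1 / s_w) (θ * (y + c))
  have hsurv : ∀ᵐ y ∂gammaMeasure m_y (1 / s_y),
      0 ≤ F y ∧ μ {ω | θ * (y + c) ≤ min (X ω) (W ω)} = ENNReal.ofReal (F y) := by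
    filter_upwards [ae_nonneg_gammaMeasure _ _] with y hy
    have ht : 0 ≤ θ * (y + c) := by positivity
    have hFx := erlangSurvival_nonneg m_x (by positivity : (0 : ℝ) ≤ 1 / s_x) ht
    have hFw := erlangSurvival_nonneg m_w (by positivity : (0 : ℝ) ≤ 1 / s_w) ht
    refine ⟨mul_nonneg hFx hFw, ?_⟩
    rw [hXW.measure_le_min]
    change μ (X ⁻¹' Set.Ici _) * μ (W ⁻¹' Set.Ici _) = _
    rw [← Measure.map_apply hX measurableSet_Ici,
      ← Measure.map_apply hW measurableSet_Ici, hXd, hWd, gammaMeasure_Ici hmx (by positivity) ht,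
      gammaMeasure_Ici hmw (by positivity) ht, ← ENNReal.ofReal_mul hFx]
  have hFcont : Continuous F := by unfold F; fun_prop
  rw [hYZ.measure_le_eq_lintegral hY (hX.min hW) (g := fun y => θ * (y + c)) (by fun_prop), hYd,
    lintegral_congr_ae (hsurv.mono fun _ h => h.2),
    ← integral_eq_lintegral_of_nonneg_ae (hsurv.mono fun _ h => h.1)
      hFcont.aestronglyMeasurable]
  exact integral_erlangSurvival_mul_erlangSurvival_gammaMeasure m_x m_w hmy hsx hsw hsy hθ.le c
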